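/- Let ε > 0, m ∈ ℝ, s > 0, and let g ~ N(m, s²). Then E[max(ε − |g|, 0)] = ε·(Φ((ε−m)/s) − Φ((−ε−m)/s)) − s·(2φ(−m/s) − φ((ε−m)/s) − φ((−ε−m)/s)) + m·(2Φ(−m/s) − Φ((ε−m)/s) − Φ((−ε−m)/s)), where φ and Φ are the standard normal pdf and cdf. -/

import Mathlib

open ProbabilityTheory MeasureTheory

noncomputable def stdNormalPDF (x : ℝ) : ℝ :=
  Real.exp (-(x ^ 2) / 2) / Real.sqrt (2 * Real.pi)

noncomputable def stdNormalCDF (x : ℝ) : ℝ :=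
  ∫ t in Set.Iic x, stdNormalPDF t

/-!
Standardising `g = s x + m` with `x ~ N(0, 1)` turns the expectation into
`∫ φ(x) (ε - |s x + m|)⁺ dx`. The integrand vanishes outside `[(-ε - m)/s, (ε - m)/s]` and is
affine in `x` on either side of `-m/s`, so the integral splits into two integrals of
`(c + d x) φ(x)` over bounded intervals, which are `c (Φ b - Φ a) + d (φ a - φ b)` because
`φ' = -x φ`.
-/

open Real

lemma gaussianPDFReal_zero_one : gaussianPDFReal 0 1 = stdNormalPDF := by
  funext x
  simp only [gaussianPDFReal, stdNormalPDF, NNReal.coe_one, mul_one, sub_zero]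
  field_simp

@[fun_prop]
lemma continuous_stdNormalPDF : Continuous stdNormalPDF := by
  unfold stdNormalPDF
  fun_prop

lemma integrable_stdNormalPDF : Integrable stdNormalPDF := by
  rw [← gaussianPDFReal_zero_one]
  exact integrable_gaussianPDFReal 0 1

lemma hasDerivAt_stdNormalPDF (x : ℝ) :
    HasDerivAt stdNormalPDF (-x * stdNormalPDF x) x := by
  have hexp : HasDerivAt (fun y : ℝ => -(y ^ 2) / 2) (-x) x :=
    ((hasDerivAt_pow 2 x).neg.div_const 2).congr_deriv (by ring)
  exact (hexp.exp.div_const (sqrt (2 * π))).congr_deriv (by simp only [stdNormalPDF]; ring)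

lemma intervalIntegral_stdNormalPDF (a b : ℝ) :
    ∫ x in a..b, stdNormalPDF x = stdNormalCDF b - stdNormalCDF a :=
  intervalIntegral.integral_Iic_sub_Iic integrable_stdNormalPDF.integrableOn
    integrable_stdNormalPDF.integrableOn |>.symm

lemma intervalIntegral_mul_stdNormalPDF (a b : ℝ) :
    ∫ x in a..b, x * stdNormalPDF x = stdNormalPDF a - stdNormalPDF b := by
  have hderiv (x : ℝ) : HasDerivAt (-stdNormalPDF) (x * stdNormalPDF x) x :=
    (hasDerivAt_stdNormalPDF x).neg.congr_deriv (by ring)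
  rw [intervalIntegral.integral_eq_sub_of_hasDerivAt (fun x _ => hderiv x)
    ((by fun_prop : Continuous fun x => x * stdNormalPDF x).intervalIntegrable a b),
    Pi.neg_apply, Pi.neg_apply]
  ring

lemma intervalIntegral_affine_mul_stdNormalPDF (c d a b : ℝ) :
    ∫ x in a..b, (c + d * x) * stdNormalPDF x
      = c * (stdNormalCDF b - stdNormalCDF a) + d * (stdNormalPDF a - stdNormalPDF b) := by
  simp_rw [add_mul, mul_assoc]
  rw [intervalIntegral.integral_add
    ((by fun_prop : Continuous fun x => c * stdNormalPDF x).intervalIntegrable a b)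
    ((by fun_prop : Continuous fun x => d * (x * stdNormalPDF x)).intervalIntegrable a b),
    intervalIntegral.integral_const_mul, intervalIntegral.integral_const_mul,
    intervalIntegral_stdNormalPDF, intervalIntegral_mul_stdNormalPDF]

lemma gaussianReal_zero_one_map_mul_add (m s : ℝ) :
    (gaussianReal 0 1).map (fun x => s * x + m) = gaussianReal m ⟨s ^ 2, sq_nonneg s⟩ := by
  have hcomp : (fun x => s * x + m) = (· + m) ∘ (s * ·) := rfl
  rw [hcomp, ← Measure.map_map (by fun_prop) (by fun_prop), gaussianReal_map_const_mul,
    gaussianReal_map_add_const, mul_zero, zero_add, mul_one]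
  rfl

lemma integral_gaussianReal_eq_integral_stdNormalPDF (m s : ℝ) {f : ℝ → ℝ} (hf : Measurable f) :
    ∫ g, f g ∂(gaussianReal m ⟨s ^ 2, sq_nonneg s⟩) = ∫ x, stdNormalPDF x * f (s * x + m) := by
  rw [← gaussianReal_zero_one_map_mul_add, integral_map (by fun_prop) hf.aestronglyMeasurable,
    integral_gaussianReal_eq_integral_smul one_ne_zero, gaussianPDFReal_zero_one]
  rfl

lemma integral_stdNormalPDF_mul_max_sub_abs {ε : ℝ} (hε : 0 ≤ ε) (m : ℝ) {s : ℝ} (hs : 0 < s) :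
    ∫ x, stdNormalPDF x * max (ε - |s * x + m|) 0
      = (∫ x in (-ε - m) / s..-m / s, (ε + m + s * x) * stdNormalPDF x)
        + ∫ x in -m / s..(ε - m) / s, (ε - m + -s * x) * stdNormalPDF x := by
  set f := fun x => stdNormalPDF x * max (ε - |s * x + m|) 0
  have hf : Continuous f := by fun_prop
  have hlower : (-ε - m) / s ≤ -m / s := div_le_div_of_nonneg_right (by linarith) hs.le
  have hupper : -m / s ≤ (ε - m) / s := div_le_div_of_nonneg_right (by linarith) hs.le
  have hsupport : ∀ x ∉ Set.Ioc ((-ε - m) / s) ((ε - m) / s), f x = 0 := by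
    intro x hx
    have hfar : ε ≤ |s * x + m| := by
      rcases not_and_or.mp hx with hx | hx
      · rw [not_lt, le_div_iff₀ hs] at hx
        exact le_abs.mpr (Or.inr (by linarith))
      · rw [not_le, div_lt_iff₀ hs] at hx
        exact le_abs.mpr (Or.inl (by linarith))
    simp [f, max_eq_right (sub_nonpos.mpr hfar)]
  have hleft : Set.EqOn f (fun x => (ε + m + s * x) * stdNormalPDF x)
      (Set.uIcc ((-ε - m) / s) (-m / s)) := by
    intro x hx
    rw [Set.uIcc_of_le hlower, Set.mem_Icc, div_le_iff₀ hs, le_div_iff₀ hs] at hx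
    simp only [f, abs_of_nonpos (by linarith : s * x + m ≤ 0),
      max_eq_left (by linarith : 0 ≤ ε - -(s * x + m))]
    ring
  have hright : Set.EqOn f (fun x => (ε - m + -s * x) * stdNormalPDF x)
      (Set.uIcc (-m / s) ((ε - m) / s)) := by
    intro x hx
    rw [Set.uIcc_of_le hupper, Set.mem_Icc, div_le_iff₀ hs, le_div_iff₀ hs] at hx
    simp only [f, abs_of_nonneg (by linarith : 0 ≤ s * x + m),
      max_eq_left (by linarith : 0 ≤ ε - (s * x + m))]
    ring
  rw [← setIntegral_eq_integral_of_forall_compl_eq_zero hsupport,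
    ← intervalIntegral.integral_of_le (hlower.trans hupper),
    ← intervalIntegral.integral_add_adjacent_intervals (hf.intervalIntegrable _ _)
      (hf.intervalIntegrable _ _),
    intervalIntegral.integral_congr hleft, intervalIntegral.integral_congr hright]

theorem stmt_5 (ε m s : ℝ) (hε : 0 < ε) (hs : 0 < s) :
    ∫ g, max (ε - |g|) 0 ∂(gaussianReal m ⟨s ^ 2, sq_nonneg s⟩)
      = ε * (stdNormalCDF ((ε - m) / s) - stdNormalCDF ((-ε - m) / s))
        - s * (2 * stdNormalPDF (-m / s) - stdNormalPDF ((ε - m) / s)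
            - stdNormalPDF ((-ε - m) / s))
        + m * (2 * stdNormalCDF (-m / s) - stdNormalCDF ((ε - m) / s)
            - stdNormalCDF ((-ε - m) / s)) := by
  rw [integral_gaussianReal_eq_integral_stdNormalPDF m s (by fun_prop),
    integral_stdNormalPDF_mul_max_sub_abs hε.le m hs,
    intervalIntegral_affine_mul_stdNormalPDF, intervalIntegral_affine_mul_stdNormalPDF]
  ring
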